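/- Let {π^i_j : B_i → B_{ij}} be a distributive family over a finite set J satisfying the cocycle condition. Then for any nonempty subset K ⊆ J, every compatible family (b_l)_{l∈K} (i.e., π^i_j(b_i) = π^j_i(b_j) for all distinct i,j ∈ K) extends to an element of the full multi-pullback B^π. -/

import Mathlib

/-!
The family is extended one index at a time. To add `k ∉ K`, lift each `π^i_k (b i)` along the
surjection `π^k_i` to some `x i ∈ B k`. The cocycle condition makes these lifts pairwise
congruent, `x i - x j ∈ ker π^k_i + ker π^k_j`, and because the kernels `ker π^k_i` lie in a
distributive lattice of ideals, the Chinese remainder theorem applies to them: pairwise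
solvable congruences have a common solution `y ∈ B k`, and `y` is compatible with every `b i`.
-/

open Function

/-- A set of ideals *generates a distributive lattice* iff it is contained in a
distributive sublattice of the lattice of ideals. -/
def GeneratesDistribLattice {A : Type*} [CommRing A] (s : Set (Ideal A)) : Prop :=
  ∃ L : Sublattice (Ideal A), (∀ I ∈ s, I ∈ L) ∧
    ∀ x ∈ L, ∀ y ∈ L, ∀ z ∈ L, x ⊓ (y ⊔ z) = (x ⊓ y) ⊔ (x ⊓ z)

variable {J : Type*}

/-- Compatibility of `b i` and `b j`: `π^i_j (b i) = π^j_i (b j)`, where the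
identification `B_{ij} = B_{ji}` is witnessed by the ring isomorphisms `e`. -/
def Compat (B : J → Type*) [∀ i, CommRing (B i)] (C : J → J → Type*)
    [∀ i j, CommRing (C i j)] (π : ∀ i j, B i →+* C i j)
    (e : ∀ i j, C i j ≃+* C j i) (i j : J) (bi : B i) (bj : B j) : Prop :=
  π i j bi = e j i (π j i bj)

/-- A *distributive family*: all the homomorphisms `π^i_j` are surjective and, for each
`i`, the kernels `ker π^i_j` generate a distributive lattice of ideals of `B i`. -/
def DistribFamily (B : J → Type*) [∀ i, CommRing (B i)] (C : J → J → Type*)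
    [∀ i j, CommRing (C i j)] (π : ∀ i j, B i →+* C i j) : Prop :=
  (∀ i j, i ≠ j → Surjective (π i j)) ∧
  ∀ i : J, GeneratesDistribLattice {I : Ideal (B i) | ∃ j, j ≠ i ∧ I = RingHom.ker (π i j)}

/-- The first cocycle condition: `π^i_j (ker π^i_k) = π^j_i (ker π^j_k)` for all
distinct `i, j, k` (the right-hand side is transported to `C i j` by `e`). -/
def Cocycle1 (B : J → Type*) [∀ i, CommRing (B i)] (C : J → J → Type*)
    [∀ i j, CommRing (C i j)] (π : ∀ i j, B i →+* C i j)
    (e : ∀ i j, C i j ≃+* C j i) : Prop :=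
  ∀ i j k : J, i ≠ j → i ≠ k → j ≠ k →
    Ideal.map (π i j) (RingHom.ker (π i k)) =
      Ideal.map ((e j i).toRingHom.comp (π j i)) (RingHom.ker (π j k))

/-- The second cocycle condition `φ^{ik}_j = φ^{ij}_k ∘ φ^{jk}_i`, expressed elementwise
via the characterization
`φ^{ij}_k ([b_j]^j_{ik}) = [b_i]^i_{jk} ↔ π^i_j(b_i) - π^j_i(b_j) ∈ π^i_j(ker π^i_k)`. -/
def Cocycle2 (B : J → Type*) [∀ i, CommRing (B i)] (C : J → J → Type*)
    [∀ i j, CommRing (C i j)] (π : ∀ i j, B i →+* C i j)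
    (e : ∀ i j, C i j ≃+* C j i) : Prop :=
  ∀ i j k : J, i ≠ j → i ≠ k → j ≠ k → ∀ (bi : B i) (bj : B j) (bk : B k),
    π j k bj - e k j (π k j bk) ∈ Ideal.map (π j k) (RingHom.ker (π j i)) →
    π i j bi - e j i (π j i bj) ∈ Ideal.map (π i j) (RingHom.ker (π i k)) →
    π i k bi - e k i (π k i bk) ∈ Ideal.map (π i k) (RingHom.ker (π i j))

/-- The cocycle condition of Calow–Matthes. -/
def CocycleCondition (B : J → Type*) [∀ i, CommRing (B i)] (C : J → J → Type*)
    [∀ i j, CommRing (C i j)] (π : ∀ i j, B i →+* C i j)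
    (e : ∀ i j, C i j ≃+* C j i) : Prop :=
  Cocycle1 B C π e ∧ Cocycle2 B C π e

/-- The two-element extension property: every compatible pair `(b_i, b_j)` extends by
some `b_k` compatible with both. -/
def ExtendsPairs (B : J → Type*) [∀ i, CommRing (B i)] (C : J → J → Type*)
    [∀ i j, CommRing (C i j)] (π : ∀ i j, B i →+* C i j)
    (e : ∀ i j, C i j ≃+* C j i) : Prop :=
  ∀ i j k : J, i ≠ j → i ≠ k → j ≠ k → ∀ (bi : B i) (bj : B j),
    Compat B C π e i j bi bj →
    ∃ bk : B k, Compat B C π e i k bi bk ∧ Compat B C π e j k bj bk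

section DistribSublattice

variable {α : Type*} [Lattice α] {L : Sublattice α}

theorem Sublattice.sup_inf_eq_of_inf_sup_distrib
    (hL : ∀ x ∈ L, ∀ y ∈ L, ∀ z ∈ L, x ⊓ (y ⊔ z) = x ⊓ y ⊔ x ⊓ z)
    {x y z : α} (hx : x ∈ L) (hy : y ∈ L) (hz : z ∈ L) :
    x ⊔ y ⊓ z = (x ⊔ y) ⊓ (x ⊔ z) := by
  symm
  rw [hL _ (L.supClosed hx hy) _ hx _ hz, inf_eq_right.mpr (le_sup_left : x ≤ x ⊔ y),
    inf_comm _ z, hL _ hz _ hx _ hy, inf_comm z x, inf_comm z y, ← sup_assoc, sup_inf_self]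

theorem Sublattice.sup_finsetInf'_eq_of_inf_sup_distrib
    (hL : ∀ x ∈ L, ∀ y ∈ L, ∀ z ∈ L, x ⊓ (y ⊔ z) = x ⊓ y ⊔ x ⊓ z)
    {ι : Type*} {s : Finset ι} (hs : s.Nonempty) {f : ι → α} (hf : ∀ i ∈ s, f i ∈ L)
    {a : α} (ha : a ∈ L) :
    a ⊔ s.inf' hs f = s.inf' hs fun i => a ⊔ f i := by
  induction hs using Finset.Nonempty.cons_induction with
  | singleton i => simp
  | cons i s hi hs ih =>
    simp only [Finset.forall_mem_cons] at hf
    rw [Finset.inf'_cons hs, Finset.inf'_cons hs,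
      Sublattice.sup_inf_eq_of_inf_sup_distrib hL ha hf.1 (L.infClosed.finsetInf'_mem hs hf.2),
      ih hf.2]

end DistribSublattice

theorem Submodule.exists_forall_sub_mem_of_inf_sup_distrib {R M ι : Type*} [Ring R]
    [AddCommGroup M] [Module R M] {L : Sublattice (Submodule R M)}
    (hL : ∀ x ∈ L, ∀ y ∈ L, ∀ z ∈ L, x ⊓ (y ⊔ z) = x ⊓ y ⊔ x ⊓ z)
    {s : Finset ι} {p : ι → Submodule R M} (hp : ∀ i ∈ s, p i ∈ L) {a : ι → M}
    (ha : ∀ i ∈ s, ∀ j ∈ s, a i - a j ∈ p i ⊔ p j) :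
    ∃ x, ∀ i ∈ s, x - a i ∈ p i := by
  classical
  induction s using Finset.induction_on with
  | empty => exact ⟨0, by simp⟩
  | insert j s _ ih =>
    simp only [Finset.forall_mem_insert] at hp ha ⊢
    obtain ⟨x, hx⟩ := ih hp.2 fun i hi => (ha.2 i hi).2
    rcases s.eq_empty_or_nonempty with rfl | hs
    · exact ⟨a j, by simp, by simp⟩
    have hxj : x - a j ∈ p j ⊔ s.inf' hs p := by
      rw [Sublattice.sup_finsetInf'_eq_of_inf_sup_distrib hL hs hp.2 hp.1, Finset.inf'_eq_inf,
        Submodule.mem_finsetInf]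
      intro i hi
      rw [show x - a j = (x - a i) + (a i - a j) by abel, sup_comm]
      exact add_mem (Submodule.mem_sup_left (hx i hi)) (ha.2 i hi).1
    obtain ⟨y, hy, z, hz, hyz⟩ := Submodule.mem_sup.mp hxj
    refine ⟨x - z, by rwa [sub_right_comm, ← hyz, add_sub_cancel_right], fun i hi => ?_⟩
    rw [sub_right_comm]
    exact sub_mem (hx i hi) (Finset.inf'_le p hi hz)

section MultiPullback

variable {B : J → Type*} [∀ i, CommRing (B i)] {C : J → J → Type*} [∀ i j, CommRing (C i j)]
  {π : ∀ i j, B i →+* C i j} {e : ∀ i j, C i j ≃+* C j i}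

def IsCompatibleOn (B : J → Type*) [∀ i, CommRing (B i)] (C : J → J → Type*)
    [∀ i j, CommRing (C i j)] (π : ∀ i j, B i →+* C i j)
    (e : ∀ i j, C i j ≃+* C j i) (K : Set J) (b : ∀ l, B l) : Prop :=
  ∀ i ∈ K, ∀ j ∈ K, i ≠ j → Compat B C π e i j (b i) (b j)

theorem Compat.symm (he : ∀ i j, e j i = (e i j).symm) {i j : J} {bi : B i} {bj : B j}
    (h : Compat B C π e i j bi bj) : Compat B C π e j i bj bi := by
  rw [Compat, h, he i j, RingEquiv.apply_symm_apply]

theorem sub_mem_ker_sup_ker_of_compat (he : ∀ i j, e j i = (e i j).symm)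
    (hsurj : ∀ i j, i ≠ j → Surjective (π i j)) (hcoc : CocycleCondition B C π e)
    {i j k : J} (hij : i ≠ j) (hik : i ≠ k) (hjk : j ≠ k) {bi : B i} {bj : B j}
    (hb : Compat B C π e i j bi bj) {xi xj : B k}
    (hxi : Compat B C π e k i xi bi) (hxj : Compat B C π e k j xj bj) :
    xi - xj ∈ RingHom.ker (π k i) ⊔ RingHom.ker (π k j) := by
  have hcongr := hcoc.2 i j k hij hik hjk bi bj xj
    (by rw [hxj.symm he, sub_self]; exact zero_mem _) (by rw [hb, sub_self]; exact zero_mem _)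
  rw [hcoc.1 i k j hik hij hjk.symm,
    Ideal.mem_map_iff_of_surjective ((e k i).toRingHom.comp (π k i))
      ((e k i).surjective.comp (hsurj k i hik.symm))] at hcongr
  obtain ⟨v, hv, hve⟩ := hcongr
  have hπv : π k i (xi - xj) = π k i v := (e k i).injective <| by
    rw [map_sub, map_sub, ← hxi.symm he]
    exact hve.symm
  exact Submodule.mem_sup.mpr
    ⟨xi - xj - v, (RingHom.sub_mem_ker_iff _).mpr hπv, v, hv, sub_add_cancel _ _⟩

theorem exists_compat_of_isCompatibleOn (he : ∀ i j, e j i = (e i j).symm)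
    (hdist : DistribFamily B C π) (hcoc : CocycleCondition B C π e) {K : Finset J} {k : J}
    (hk : k ∉ K) {b : ∀ l, B l} (hb : IsCompatibleOn B C π e K b) :
    ∃ y : B k, ∀ i ∈ K, Compat B C π e k i y (b i) := by
  obtain ⟨L, hkerL, hL⟩ := hdist.2 k
  have hki : ∀ i ∈ K, k ≠ i := fun i hi h => hk (h ▸ hi)
  choose! x hx using fun i (hi : i ∈ K) => hdist.1 k i (hki i hi) (e i k (π i k (b i)))
  obtain ⟨y, hy⟩ := Submodule.exists_forall_sub_mem_of_inf_sup_distrib hL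
    (p := fun i => RingHom.ker (π k i)) (fun i hi => hkerL _ ⟨i, (hki i hi).symm, rfl⟩)
    (a := x) fun i hi j hj => by
      obtain rfl | hij := eq_or_ne i j
      · simp
      exact sub_mem_ker_sup_ker_of_compat he hdist.1 hcoc hij (hki i hi).symm (hki j hj).symm
        (hb i hi j hj hij) (hx i hi) (hx j hj)
  exact ⟨y, fun i hi => ((RingHom.sub_mem_ker_iff _).mp (hy i hi)).trans (hx i hi)⟩

theorem IsCompatibleOn.update_insert [DecidableEq J] (he : ∀ i j, e j i = (e i j).symm)
    {K : Set J} {b : ∀ l, B l} (hb : IsCompatibleOn B C π e K b) {k : J} (hk : k ∉ K)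
    {y : B k} (hy : ∀ i ∈ K, Compat B C π e k i y (b i)) :
    IsCompatibleOn B C π e (insert k K) (update b k y) := by
  rintro i (rfl | hi) j (rfl | hj) hij
  · exact absurd rfl hij
  · rw [update_self, update_of_ne (ne_of_mem_of_not_mem hj hk)]
    exact hy j hj
  · rw [update_self, update_of_ne (ne_of_mem_of_not_mem hi hk)]
    exact (hy i hi).symm he
  · rw [update_of_ne (ne_of_mem_of_not_mem hi hk), update_of_ne (ne_of_mem_of_not_mem hj hk)]
    exact hb i hi j hj hij

theorem IsCompatibleOn.exists_extension [Fintype J] (he : ∀ i j, e j i = (e i j).symm)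
    (hdist : DistribFamily B C π) (hcoc : CocycleCondition B C π e) {K : Finset J}
    {b : ∀ l, B l} (hb : IsCompatibleOn B C π e K b) :
    ∃ c, IsCompatibleOn B C π e Set.univ c ∧ ∀ l ∈ K, c l = b l := by
  classical
  suffices h : ∀ s : Finset J, ∃ c, IsCompatibleOn B C π e ↑(K ∪ s) c ∧ ∀ l ∈ K, c l = b l by
    simpa using h Finset.univ
  intro s
  induction s using Finset.induction_on with
  | empty => exact ⟨b, by simpa using hb, fun _ _ => rfl⟩
  | insert k s _ ih =>
    obtain ⟨c, hc, hcb⟩ := ih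
    rw [Finset.union_insert]
    by_cases hk : k ∈ K ∪ s
    · exact ⟨c, by rwa [Finset.insert_eq_of_mem hk], hcb⟩
    obtain ⟨y, hy⟩ := exists_compat_of_isCompatibleOn he hdist hcoc hk hc
    refine ⟨update c k y, ?_, fun l hl => ?_⟩
    · rw [Finset.coe_insert]
      exact hc.update_insert he (by exact_mod_cast hk) hy
    · rw [update_of_ne (ne_of_mem_of_not_mem hl fun h => hk (Finset.mem_union_left s h))]
      exact hcb l hl

end MultiPullback

theorem stmt16_general [Fintype J] (B : J → Type*) [∀ i, CommRing (B i)]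
    (C : J → J → Type*) [∀ i j, CommRing (C i j)]
    (π : ∀ i j, B i →+* C i j) (e : ∀ i j, C i j ≃+* C j i)
    (he : ∀ i j, e j i = (e i j).symm)
    (hdist : DistribFamily B C π)
    (hcoc : CocycleCondition B C π e) :
    ∀ K : Finset J, K.Nonempty → ∀ b : ∀ l, B l,
      (∀ i ∈ K, ∀ j ∈ K, i ≠ j → Compat B C π e i j (b i) (b j)) →
      ∃ c : ∀ l, B l, (∀ i j, i ≠ j → Compat B C π e i j (c i) (c j)) ∧
        ∀ l ∈ K, c l = b l := by
  intro K _ b hb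
  obtain ⟨c, hc, hcb⟩ := IsCompatibleOn.exists_extension he hdist hcoc (K := K) hb
  exact ⟨c, fun i j => hc i trivial j trivial, hcb⟩

/-- for a distributive family satisfying the cocycle condition, every
compatible family defined on a nonempty subset `K ⊆ J` extends to an element of the
full multi-pullback. -/
theorem stmt16 [Fintype J] [DecidableEq J] (B : J → Type*) [∀ i, CommRing (B i)]
    (C : J → J → Type*) [∀ i j, CommRing (C i j)]
    (π : ∀ i j, B i →+* C i j) (e : ∀ i j, C i j ≃+* C j i)
    (he : ∀ i j, e j i = (e i j).symm)
    (hdist : DistribFamily B C π)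
    (hcoc : CocycleCondition B C π e) :
    ∀ K : Finset J, K.Nonempty → ∀ b : ∀ l, B l,
      (∀ i ∈ K, ∀ j ∈ K, i ≠ j → Compat B C π e i j (b i) (b j)) →
      ∃ c : ∀ l, B l, (∀ i j, i ≠ j → Compat B C π e i j (c i) (c j)) ∧
        ∀ l ∈ K, c l = b l :=
  stmt16_general B C π e he hdist hcoc
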